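/- For every d ≥ 12, there exists a d × d standardized symmetric positive semidefinite matrix that is not a Spearman's rho matrix; namely the block-diagonal matrix M_d = diag(M, I_{d-12}), where M is the 12 × 12 Gram matrix of the twelve vectors e₁,...,e₄ and (1/2)(1,±1,±1,±1). -/

import Mathlib

open MeasureTheory
open scoped Matrix

/-- `R` is a Spearman's rho matrix if there is a random vector `X` with continuous
marginal distributions whose matrix of pairwise Spearman rank correlations
`12 * E[F_i(X_i) F_j(X_j)] - 3` is `R`, where `F_i` is the cdf of `X_i`. -/
def IsSpearmanMatrix {d : ℕ} (R : Matrix (Fin d) (Fin d) ℝ) : Prop :=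
  ∃ (Ω : Type) (_ : MeasurableSpace Ω) (μ : Measure Ω) (_ : IsProbabilityMeasure μ)
    (X : Ω → Fin d → ℝ),
    (∀ i, Measurable fun ω => X ω i) ∧
    (∀ i (x : ℝ), Measure.map (fun ω => X ω i) μ {x} = 0) ∧
    ∀ i j, R i j =
      12 * (∫ ω, ProbabilityTheory.cdf (Measure.map (fun ω' => X ω' i) μ) (X ω i) *
        ProbabilityTheory.cdf (Measure.map (fun ω' => X ω' j) μ) (X ω j) ∂μ) - 3

noncomputable def paperVecs : Matrix (Fin 12) (Fin 4) ℝ :=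
  !![1, 0, 0, 0;
     0, 1, 0, 0;
     0, 0, 1, 0;
     0, 0, 0, 1;
     1/2,  1/2,  1/2,  1/2;
     1/2,  1/2,  1/2, -1/2;
     1/2,  1/2, -1/2,  1/2;
     1/2,  1/2, -1/2, -1/2;
     1/2, -1/2,  1/2,  1/2;
     1/2, -1/2,  1/2, -1/2;
     1/2, -1/2, -1/2,  1/2;
     1/2, -1/2, -1/2, -1/2]

/-- The Gram matrix of the twelve vectors. -/
noncomputable def gramM : Matrix (Fin 12) (Fin 12) ℝ := paperVecs * paperVecsᵀ

/-- The block-diagonal matrix diag(M, I_{d-12}) in dimension d. -/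
noncomputable def gramMd (d : ℕ) : Matrix (Fin d) (Fin d) ℝ := fun i j =>
  if hi : (i : ℕ) < 12 then
    (if hj : (j : ℕ) < 12 then gramM ⟨i, hi⟩ ⟨j, hj⟩ else 0)
  else (if i = j then 1 else 0)

/-!
Apply the probability integral transform: `Uᵢ = Fᵢ(Xᵢ)` is uniform on `[0, 1]`, and for
`Y = U - 1/2` the second-moment matrix `E[Y Yᵀ]` equals `M / 12`. As `M = V Vᵀ`, where the
`12 × 4` matrix `V` of the twelve vectors starts with the identity, every `w` with `wᵀ V = 0`
has `E[(w ⬝ Y)²] = wᵀ M w / 12 = 0`, so almost surely `Y = V z` with `z = (Y₁, Y₂, Y₃, Y₄)`.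
Up to a global sign the eight vectors `(1, ±1, ±1, ±1) / 2` realise every sign pattern, so some
`Yₖ` equals `± (|z₁| + ⋯ + |z₄|) / 2`; since `|Yₖ| < 1/2` almost surely, `∑ |z_c| < 1` almost
surely. This contradicts `E |Yᵢ| = 1/4`, which gives `E ∑ |z_c| = 1`.
-/

open ProbabilityTheory Set Filter Matrix

instance : IsProbabilityMeasure (volume.restrict (Icc (0 : ℝ) 1)) :=
  ⟨by simp [Real.volume_Icc]⟩

namespace ProbabilityTheory

section ProbabilityIntegralTransform

variable (ν : Measure ℝ) [IsProbabilityMeasure ν] [NullSingletonClass ν]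

lemma continuous_cdf : Continuous (cdf ν) := by
  refine continuous_iff_continuousAt.2 fun x => continuousAt_iff_continuous_left_right.2
    ⟨?_, (cdf ν).right_continuous x⟩
  have hatom := (cdf ν).measure_singleton x
  rw [measure_cdf, measure_singleton, eq_comm, ENNReal.ofReal_eq_zero] at hatom
  rw [← continuousWithinAt_Iio_iff_Iic, (monotone_cdf ν).continuousWithinAt_Iio_iff_leftLim_eq]
  linarith [(monotone_cdf ν).leftLim_le (le_refl x)]

lemma measure_setOf_cdf_le {t : ℝ} (ht₀ : 0 ≤ t) (ht₁ : t < 1) :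
    ν {x | cdf ν x ≤ t} = ENNReal.ofReal t := by
  set S := {x | cdf ν x ≤ t}
  rcases S.eq_empty_or_nonempty with hS | hS
  · obtain rfl : 0 = t := by
      refine ht₀.eq_or_lt.resolve_right fun ht => ?_
      obtain ⟨x, hx⟩ := ((tendsto_cdf_atBot ν).eventually_lt_const ht).exists
      exact hS.subset (show x ∈ S from hx.le)
    simp [S, hS]
  have hbdd : BddAbove S := by
    obtain ⟨b, hb⟩ := ((tendsto_cdf_atTop ν).eventually_const_lt ht₁).exists_forall_of_atTop
    exact ⟨b, fun x hx => not_lt.1 fun hbx => (hb x hbx.le).not_ge hx⟩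
  set c := sSup S
  have hc : cdf ν c ≤ t := (isClosed_le (continuous_cdf ν) continuous_const).csSup_mem hS hbdd
  have hSc : S = Iic c :=
    Subset.antisymm (fun x hx => le_csSup hbdd hx) fun x hx => ((monotone_cdf ν) hx).trans hc
  have hgt : Ioi c ⊆ {x | t ≤ cdf ν x} := fun x (hx : c < x) =>
    show t ≤ cdf ν x from le_of_lt (not_le.1 fun h => (le_csSup hbdd h).not_gt hx)
  have hc' : t ≤ cdf ν c :=
    ((isClosed_le continuous_const (continuous_cdf ν)).closure_subset_iff.2 hgt)
      (by rw [closure_Ioi]; exact self_mem_Ici)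
  rw [hSc, ← ofReal_cdf, le_antisymm hc hc']

theorem hasLaw_cdf : HasLaw (cdf ν) (volume.restrict (Icc 0 1)) ν := by
  have hmeas : Measurable (cdf ν) := (monotone_cdf ν).measurable
  refine ⟨hmeas.aemeasurable, ?_⟩
  have := Measure.isProbabilityMeasure_map (μ := ν) hmeas.aemeasurable
  refine Measure.ext_of_Iic _ _ fun t => ?_
  rw [Measure.map_apply hmeas measurableSet_Iic, Measure.restrict_apply measurableSet_Iic]
  rcases lt_or_ge t 0 with ht | ht₀
  · have h₁ : cdf ν ⁻¹' Iic t = ∅ := eq_empty_of_forall_notMem fun x (hx : cdf ν x ≤ t) =>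
      (cdf_nonneg ν x).not_gt (hx.trans_lt ht)
    have h₂ : Iic t ∩ Icc 0 1 = ∅ := eq_empty_of_forall_notMem fun x hx =>
      (hx.1.trans_lt ht).not_ge hx.2.1
    simp [h₁, h₂]
  have h₂ : Iic t ∩ Icc 0 1 = Icc 0 (min t 1) := by
    ext x; simp only [mem_inter_iff, mem_Iic, mem_Icc, le_min_iff]; tauto
  rw [h₂, Real.volume_Icc, sub_zero]
  rcases lt_or_ge t 1 with ht₁ | ht₁
  · rw [min_eq_left ht₁.le]
    exact measure_setOf_cdf_le ν ht₀ ht₁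
  · have h₁ : cdf ν ⁻¹' Iic t = univ := eq_univ_of_forall fun x => (cdf_le_one ν x).trans ht₁
    simp [h₁, min_eq_right ht₁]

end ProbabilityIntegralTransform

section UniformUnitInterval

variable {Ω : Type*} [MeasurableSpace Ω] {μ : Measure Ω} {U V : Ω → ℝ}

lemma HasLaw.integral_comp_of_uniform (hU : HasLaw U (volume.restrict (Icc 0 1)) μ)
    {f : ℝ → ℝ} (hf : Continuous f) : ∫ ω, f (U ω) ∂μ = ∫ x in (0 : ℝ)..1, f x := by
  rw [← Function.comp_def, hU.integral_comp hf.aestronglyMeasurable,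
    intervalIntegral.integral_of_le zero_le_one, integral_Icc_eq_integral_Ioc]

lemma HasLaw.abs_sub_half_lt_of_uniform (hU : HasLaw U (volume.restrict (Icc 0 1)) μ) :
    ∀ᵐ ω ∂μ, |U ω - 1 / 2| < 1 / 2 := by
  have h : ∀ᵐ x ∂volume.restrict (Icc (0 : ℝ) 1), x ∈ Ioo 0 1 := by
    rw [← Measure.restrict_congr_set Ioo_ae_eq_Icc]
    exact ae_restrict_mem measurableSet_Ioo
  filter_upwards [(hU.ae_iff measurableSet_Ioo.mem).2 h] with ω hω
  exact abs_sub_lt_iff.2 ⟨by linarith [hω.2], by linarith [hω.1]⟩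

lemma HasLaw.integrable_of_uniform (hU : HasLaw U (volume.restrict (Icc 0 1)) μ) :
    Integrable U μ := by
  have := hU.isProbabilityMeasure
  refine Integrable.of_bound hU.aemeasurable.aestronglyMeasurable 1 ?_
  filter_upwards [hU.abs_sub_half_lt_of_uniform] with ω hω
  rw [Real.norm_eq_abs, abs_le]
  constructor <;> linarith [abs_lt.1 hω]

lemma HasLaw.integrable_sub_half_mul_of_uniform (hU : HasLaw U (volume.restrict (Icc 0 1)) μ)
    (hV : HasLaw V (volume.restrict (Icc 0 1)) μ) :
    Integrable (fun ω => (U ω - 1 / 2) * (V ω - 1 / 2)) μ := by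
  have := hU.isProbabilityMeasure
  refine Integrable.of_bound ((hU.aemeasurable.sub_const _).mul
    (hV.aemeasurable.sub_const _)).aestronglyMeasurable 1 ?_
  filter_upwards [hU.abs_sub_half_lt_of_uniform, hV.abs_sub_half_lt_of_uniform] with ω hωU hωV
  rw [norm_mul, Real.norm_eq_abs, Real.norm_eq_abs]
  nlinarith [abs_nonneg (U ω - 1 / 2), abs_nonneg (V ω - 1 / 2)]

lemma HasLaw.integral_sub_half_mul_of_uniform (hU : HasLaw U (volume.restrict (Icc 0 1)) μ)
    (hV : HasLaw V (volume.restrict (Icc 0 1)) μ) :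
    ∫ ω, (U ω - 1 / 2) * (V ω - 1 / 2) ∂μ = ∫ ω, U ω * V ω ∂μ - 1 / 4 := by
  have := hU.isProbabilityMeasure
  have hmean : ∀ {W : Ω → ℝ}, HasLaw W (volume.restrict (Icc 0 1)) μ → ∫ ω, W ω ∂μ = 1 / 2 :=
    fun hW => by simpa using hW.integral_comp_of_uniform continuous_id
  have hUV := hU.integrable_sub_half_mul_of_uniform hV
  have hU' := hU.integrable_of_uniform.const_mul (1 / 2)
  have hV' := hV.integrable_of_uniform.const_mul (1 / 2)
  have hsplit : ∫ ω, U ω * V ω ∂μ =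
      ∫ ω, ((U ω - 1 / 2) * (V ω - 1 / 2) + (1 / 2 * U ω + 1 / 2 * V ω)) - 1 / 4 ∂μ := by
    congr 1; ext; ring
  rw [hsplit, integral_sub (by fun_prop) (integrable_const _), integral_add hUV (by fun_prop),
    integral_add hU' hV', integral_const_mul, integral_const_mul, hmean hU, hmean hV]
  simp only [integral_const, probReal_univ, smul_eq_mul, one_mul]
  ring

lemma HasLaw.integral_abs_sub_half_of_uniform (hU : HasLaw U (volume.restrict (Icc 0 1)) μ) :
    ∫ ω, |U ω - 1 / 2| ∂μ = 1 / 4 := by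
  rw [hU.integral_comp_of_uniform (f := fun x => |x - 1 / 2|) (by fun_prop)]
  have hi : ∀ a b : ℝ, IntervalIntegrable (fun x => |x - 1 / 2|) volume a b :=
    fun a b => (by fun_prop : Continuous fun x : ℝ => |x - 1 / 2|).intervalIntegrable a b
  rw [← intervalIntegral.integral_add_adjacent_intervals (hi 0 (1 / 2)) (hi (1 / 2) 1),
    intervalIntegral.integral_congr (g := fun x => 1 / 2 - x) fun x hx => ?_,
    intervalIntegral.integral_congr (a := 1 / 2) (g := fun x => x - 1 / 2) fun x hx => ?_]
  · norm_num [integral_id, intervalIntegral.integral_comp_sub_left (fun x => x)]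
  · rw [uIcc_of_le (by norm_num)] at hx
    exact abs_of_nonneg (by linarith [hx.1])
  · rw [uIcc_of_le (by norm_num)] at hx
    simp only [abs_of_nonpos (by linarith [hx.2] : x - 1 / 2 ≤ 0)]; ring

end UniformUnitInterval

lemma integral_lt_of_ae_lt {Ω : Type*} [MeasurableSpace Ω] {μ : Measure Ω}
    [IsProbabilityMeasure μ] {f : Ω → ℝ} (hf : Integrable f μ) {C : ℝ}
    (h : ∀ᵐ ω ∂μ, f ω < C) : ∫ ω, f ω ∂μ < C := by
  by_contra hge
  have hnn : 0 ≤ᵐ[μ] fun ω => C - f ω := h.mono fun ω h => (sub_pos.2 h).le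
  have hint := (integrable_const C).sub hf
  have hzero : ∫ ω, C - f ω ∂μ = 0 := by
    refine le_antisymm ?_ (integral_nonneg_of_ae hnn)
    rw [integral_sub (integrable_const C) hf, integral_const, probReal_univ, one_smul]
    linarith
  obtain ⟨ω, hlt, heq⟩ := (h.and ((integral_eq_zero_iff_of_nonneg_ae hnn hint).1 hzero)).exists
  simp only [Pi.zero_apply, sub_eq_zero] at heq
  exact hlt.ne' heq

section SecondMoment

variable {ι Ω : Type*} [Fintype ι] [MeasurableSpace Ω] {μ : Measure Ω} {Y : Ω → ι → ℝ}

noncomputable def secondMoment (μ : Measure Ω) (Y : Ω → ι → ℝ) : Matrix ι ι ℝ :=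
  Matrix.of fun i j => ∫ ω, Y ω i * Y ω j ∂μ

lemma integral_dotProduct_sq (hY : ∀ i j, Integrable (fun ω => Y ω i * Y ω j) μ) (w : ι → ℝ) :
    ∫ ω, (w ⬝ᵥ Y ω) ^ 2 ∂μ = w ⬝ᵥ (secondMoment μ Y *ᵥ w) := by
  have hsq : ∀ ω, (w ⬝ᵥ Y ω) ^ 2 = ∑ i, ∑ j, w i * w j * (Y ω i * Y ω j) := fun ω => by
    simp only [sq, dotProduct, Finset.sum_mul_sum]
    exact Finset.sum_congr rfl fun i _ => Finset.sum_congr rfl fun j _ => by ring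
  simp_rw [hsq]
  rw [integral_finsetSum _ fun i _ => integrable_finsetSum _ fun j _ => (hY i j).const_mul _]
  simp_rw [integral_finsetSum _ fun j _ => (hY _ j).const_mul _, integral_const_mul]
  simp only [dotProduct, mulVec, secondMoment, Matrix.of_apply, Finset.mul_sum]
  exact Finset.sum_congr rfl fun i _ => Finset.sum_congr rfl fun j _ => by ring

lemma ae_dotProduct_eq_zero_of_vecMul_secondMoment_eq_zero
    (hY : ∀ i j, Integrable (fun ω => Y ω i * Y ω j) μ) {w : ι → ℝ}
    (hw : w ᵥ* secondMoment μ Y = 0) : ∀ᵐ ω ∂μ, w ⬝ᵥ Y ω = 0 := by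
  have hint : Integrable (fun ω => (w ⬝ᵥ Y ω) ^ 2) μ := by
    simp only [sq, dotProduct, Finset.sum_mul_sum]
    exact integrable_finsetSum _ fun i _ => integrable_finsetSum _ fun j _ =>
      ((hY i j).const_mul (w i * w j)).congr (ae_of_all _ fun ω => by ring)
  have hzero : ∫ ω, (w ⬝ᵥ Y ω) ^ 2 ∂μ = 0 := by
    rw [integral_dotProduct_sq hY, dotProduct_mulVec, hw, zero_dotProduct]
  filter_upwards [(integral_eq_zero_iff_of_nonneg (fun ω => sq_nonneg _) hint).1 hzero]
    with ω hω using pow_eq_zero_iff two_ne_zero |>.1 hω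

lemma ae_mulVec_eq_zero_of_mul_secondMoment_eq_zero {κ : Type*} [Countable κ]
    (hY : ∀ i j, Integrable (fun ω => Y ω i * Y ω j) μ) {L : Matrix κ ι ℝ}
    (hL : L * secondMoment μ Y = 0) : ∀ᵐ ω ∂μ, L *ᵥ Y ω = 0 := by
  have hrow : ∀ k, ∀ᵐ ω ∂μ, L k ⬝ᵥ Y ω = 0 := fun k =>
    ae_dotProduct_eq_zero_of_vecMul_secondMoment_eq_zero hY (by
      ext j; simpa [vecMul, dotProduct, Matrix.mul_apply] using congrFun (congrFun hL k) j)
  filter_upwards [ae_all_iff.2 hrow] with ω hω using funext hω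

lemma ae_eq_mulVec_mulVec_of_secondMoment_eq {κ : Type*} [Fintype κ] [DecidableEq ι]
    [DecidableEq κ] (hY : ∀ i j, Integrable (fun ω => Y ω i * Y ω j) μ) {A : Matrix ι κ ℝ}
    {S : Matrix κ ι ℝ} (hSA : S * A = 1) {c : ℝ} (hM : secondMoment μ Y = c • (A * Aᵀ)) :
    ∀ᵐ ω ∂μ, Y ω = A *ᵥ (S *ᵥ Y ω) := by
  have hL : (1 - A * S) * secondMoment μ Y = 0 := by
    rw [hM, Matrix.mul_smul, sub_mul, Matrix.one_mul, Matrix.mul_assoc A S, ← Matrix.mul_assoc S,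
      hSA, Matrix.one_mul, sub_self, smul_zero]
  filter_upwards [ae_mulVec_eq_zero_of_mul_secondMoment_eq_zero hY hL] with ω hω
  rwa [sub_mulVec, one_mulVec, ← mulVec_mulVec, sub_eq_zero] at hω

end SecondMoment

end ProbabilityTheory

lemma IsSpearmanMatrix.submatrix {d n : ℕ} {R : Matrix (Fin d) (Fin d) ℝ}
    (h : IsSpearmanMatrix R) (e : Fin n → Fin d) : IsSpearmanMatrix (R.submatrix e e) := by
  obtain ⟨Ω, _, μ, hμ, X, hX, hatom, hR⟩ := h
  exact ⟨Ω, _, μ, hμ, fun ω => X ω ∘ e, fun i => hX (e i), fun i => hatom (e i),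
    fun i j => hR (e i) (e j)⟩

lemma IsSpearmanMatrix.exists_uniform {d : ℕ} {R : Matrix (Fin d) (Fin d) ℝ}
    (h : IsSpearmanMatrix R) :
    ∃ (Ω : Type) (_ : MeasurableSpace Ω) (μ : Measure Ω) (_ : IsProbabilityMeasure μ)
      (U : Ω → Fin d → ℝ), (∀ i, HasLaw (fun ω => U ω i) (volume.restrict (Icc 0 1)) μ) ∧
      ∀ i j, R i j = 12 * ∫ ω, U ω i * U ω j ∂μ - 3 := by
  obtain ⟨Ω, _, μ, hμ, X, hX, hatom, hR⟩ := h
  refine ⟨Ω, _, μ, hμ, fun ω i => cdf (μ.map (X · i)) (X ω i), fun i => ?_, hR⟩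
  have := Measure.isProbabilityMeasure_map (μ := μ) (hX i).aemeasurable
  have : NullSingletonClass (μ.map (X · i)) := ⟨hatom i⟩
  exact (hasLaw_cdf _).fun_comp ⟨(hX i).aemeasurable, rfl⟩

noncomputable def firstFourCoords : Matrix (Fin 4) (Fin 12) ℝ :=
  (1 : Matrix (Fin 12) (Fin 12) ℝ).submatrix (Fin.castLE (by norm_num)) id

lemma firstFourCoords_mul_paperVecs : firstFourCoords * paperVecs = 1 := by
  ext i j
  fin_cases i <;> fin_cases j <;> simp [firstFourCoords, paperVecs, mul_apply, one_apply]

lemma firstFourCoords_mulVec (y : Fin 12 → ℝ) :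
    firstFourCoords *ᵥ y = fun c => y (Fin.castLE (by norm_num) c) := by
  ext c
  simp [firstFourCoords, mulVec, dotProduct, one_apply]

lemma gramM_apply_self (i : Fin 12) : gramM i i = 1 := by
  fin_cases i <;>
    norm_num [gramM, paperVecs, mul_apply, Fin.sum_univ_four, cons_val_two, cons_val_three]

lemma exists_sum_abs_le_two_mul_abs_paperVecs_mulVec (z : Fin 4 → ℝ) :
    ∃ k, ∑ c, |z c| ≤ 2 * |(paperVecs *ᵥ z) k| := by
  wlog h0 : 0 ≤ z 0 generalizing z
  · obtain ⟨k, hk⟩ := this (-z) (by simp; linarith)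
    exact ⟨k, by simpa [mulVec_neg] using hk⟩
  suffices ∃ k, ∑ c, |z c| ≤ 2 * (paperVecs *ᵥ z) k from
    this.imp fun k hk => hk.trans (mul_le_mul_of_nonneg_left (le_abs_self _) zero_le_two)
  simp only [Fin.exists_fin_succ, Fin.exists_fin_zero]
  simp only [Fin.sum_univ_four, Fin.isValue, abs_of_nonneg h0, mulVec, dotProduct, paperVecs,
    one_div, of_apply, cons_val', cons_val_fin_one, cons_val_zero, one_mul, cons_val_one,
    zero_mul, add_zero, cons_val, Fin.succ_zero_eq_one, zero_add, Fin.succ_one_eq_two,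
    Fin.reduceSucc, or_iff_not_imp_left, not_le, imp_false, not_lt]
  rcases le_total 0 (z 1) with h1 | h1 <;> rcases le_total 0 (z 2) with h2 | h2 <;>
    rcases le_total 0 (z 3) with h3 | h3 <;>
    simp only [abs_of_nonneg, abs_of_nonpos, h1, h2, h3] <;> intros <;> linarith

theorem not_isSpearmanMatrix_gramM : ¬ IsSpearmanMatrix gramM := by
  intro h
  obtain ⟨Ω, _, μ, _, U, hU, hR⟩ := h.exists_uniform
  set Y : Ω → Fin 12 → ℝ := fun ω i => U ω i - 1 / 2
  have hM : secondMoment μ Y = (12 : ℝ)⁻¹ • (paperVecs * paperVecsᵀ) := by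
    ext i j
    change ∫ ω, Y ω i * Y ω j ∂μ = (12 : ℝ)⁻¹ * gramM i j
    rw [(hU i).integral_sub_half_mul_of_uniform (hU j), hR]
    ring
  have hspan : ∀ᵐ ω ∂μ, Y ω = paperVecs *ᵥ (firstFourCoords *ᵥ Y ω) :=
    ae_eq_mulVec_mulVec_of_secondMoment_eq (fun i j => (hU i).integrable_sub_half_mul_of_uniform
      (hU j)) firstFourCoords_mul_paperVecs hM
  set T : Ω → ℝ := fun ω => ∑ c, |(firstFourCoords *ᵥ Y ω) c|
  have hT_lt : ∀ᵐ ω ∂μ, T ω < 1 := by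
    filter_upwards [hspan, ae_all_iff.2 fun k => (hU k).abs_sub_half_lt_of_uniform]
      with ω hω hsmall
    obtain ⟨k, hk⟩ := exists_sum_abs_le_two_mul_abs_paperVecs_mulVec (firstFourCoords *ᵥ Y ω)
    rw [← hω] at hk
    linarith [hsmall k]
  have hYi : ∀ i, Integrable (fun ω => |Y ω i|) μ := fun i =>
    ((hU i).integrable_of_uniform.sub (integrable_const _)).abs
  simp only [T, firstFourCoords_mulVec] at hT_lt
  have hT := integral_lt_of_ae_lt (integrable_finsetSum _ fun c _ => hYi _) hT_lt
  rw [integral_finsetSum _ fun c _ => hYi _] at hT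
  simp only [Y, (hU _).integral_abs_sub_half_of_uniform] at hT
  norm_num at hT

noncomputable def gramMdFactor (d : ℕ) : Matrix (Fin d) (Fin 4) ℝ :=
  Matrix.of fun i c => if hi : (i : ℕ) < 12 then paperVecs ⟨i, hi⟩ c else 0

lemma gramMd_eq_mul_transpose_add_diagonal (d : ℕ) :
    gramMd d = gramMdFactor d * (gramMdFactor d)ᵀ +
      diagonal fun i : Fin d => if 12 ≤ (i : ℕ) then 1 else 0 := by
  ext i j
  by_cases hi : (i : ℕ) < 12 <;> by_cases hj : (j : ℕ) < 12 <;>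
    simp [gramMd, gramM, gramMdFactor, mul_apply, diagonal_apply, hi, hj, le_of_not_gt]

lemma gramMd_posSemidef (d : ℕ) : (gramMd d).PosSemidef := by
  rw [gramMd_eq_mul_transpose_add_diagonal, ← conjTranspose_eq_transpose_of_trivial]
  exact (posSemidef_self_mul_conjTranspose _).add
    (posSemidef_diagonal_iff.2 fun i => by split_ifs <;> norm_num)

lemma gramMd_apply_self (d : ℕ) (i : Fin d) : gramMd d i i = 1 := by
  by_cases hi : (i : ℕ) < 12 <;> simp [gramMd, hi, gramM_apply_self]

lemma gramMd_submatrix_castLE {d : ℕ} (hd : 12 ≤ d) :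
    (gramMd d).submatrix (Fin.castLE hd) (Fin.castLE hd) = gramM := by
  ext i j
  simp [gramMd, i.isLt, j.isLt]

/-- For every d ≥ 12 there is a standardized symmetric positive semidefinite d × d matrix
that is not a Spearman's rho matrix, namely diag(M, I_{d-12}). -/
theorem spearman_ne_psd_of_twelve_le {d : ℕ} (hd : 12 ≤ d) :
    (gramMd d).PosSemidef ∧ (∀ i, gramMd d i i = 1) ∧ ¬ IsSpearmanMatrix (gramMd d) :=
  ⟨gramMd_posSemidef d, gramMd_apply_self d, fun h =>
    not_isSpearmanMatrix_gramM (gramMd_submatrix_castLE hd ▸ h.submatrix (Fin.castLE hd))⟩
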